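/- There exists a perfect tree T ⊆ 2^{<ω} such that for every n < ω and every A ⊆ [T] with |A| ≥ 2^n, A shatters a subset of ω of size n. Consequently, every infinite subset of [T] has infinite string dimension. -/

import Mathlib

open Cardinal

/-- `F` shatters `A` if every function `A → Bool` extends to an element of `F`. -/
def Shatters {X : Type*} (F : Set (X → Bool)) (A : Set X) : Prop :=
  ∀ g : X → Bool, ∃ f ∈ F, ∀ a ∈ A, f a = g a

/-- The string dimension of `F`: the least cardinal `δ` such that `F` shatters no
set of cardinality `δ`. -/
noncomputable def sdim {X : Type*} (F : Set (X → Bool)) : Cardinal :=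
  sInf {δ : Cardinal | ∀ A : Set X, #A = δ → ¬ Shatters F A}

/-- The cofinal branches of a tree `T ⊆ 2^{<ω}` (nodes coded as lists of booleans). -/
def branches (T : Set (List Bool)) : Set (ℕ → Bool) :=
  {x | ∀ n : ℕ, (List.ofFn fun i : Fin n => x i) ∈ T}

/-!
Enumerate all pairs `⟨k, f⟩` with `f` a Boolean function on `2^k`, and send `y ∈ 2^ω` to the
sequence of answers `f (y ↾ k)`. This is a continuous injection of Cantor space, so its range is
a closed set without isolated points: the set of branches of a perfect tree. Given `2^n` distinct
points of the range, indexed by `v ∈ 2^n`, some `k` separates their restrictions to `k`, so for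
each `i < n` some query `⟨k, fᵢ⟩` answers `v i` on the point indexed by `v`; these `n`
coordinates are shattered.
-/

open Cardinal Function PiNat

section Shattering

variable {X : Type*} {F : Set (X → Bool)}

theorem exists_card_eq_shatters {n : ℕ} (x : (Fin n → Bool) → X → Bool) (hx : ∀ v, x v ∈ F)
    (p : Fin n → X) (hp : ∀ v i, x v (p i) = v i) : ∃ S : Set X, #S = n ∧ Shatters F S := by
  have hp_inj : Injective p := fun i j hij => by
    have := (hp _ i).symm.trans ((congrArg (x fun l => decide (l = i)) hij).trans (hp _ j))
    simpa [eq_comm] using this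
  refine ⟨Set.range p, by simpa using mk_range_eq_of_injective hp_inj, fun g => ?_⟩
  exact ⟨x fun i => g (p i), hx _, by rintro _ ⟨i, rfl⟩; exact hp _ i⟩

theorem aleph0_le_sdim (h : ∀ n : ℕ, ∃ S : Set X, #S = n ∧ Shatters F S) : ℵ₀ ≤ sdim F := by
  have hbig : ∀ S : Set X, #S ≠ 2 ^ #X := fun S hS =>
    (hS ▸ (mk_set_le S).trans_lt (cantor #X)).false
  refine le_csInf ⟨2 ^ #X, fun S hS _ => hbig S hS⟩ fun δ hδ => ?_
  by_contra hlt
  obtain ⟨n, rfl⟩ := lt_aleph0.mp (not_le.mp hlt)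
  obtain ⟨S, hS, hshat⟩ := h n
  exact hδ S hS hshat

end Shattering

section PrefixTree

def initSeg (x : ℕ → Bool) (n : ℕ) : List Bool :=
  List.ofFn fun i : Fin n => x i

def prefixTree (X : Set (ℕ → Bool)) : Set (List Bool) :=
  {t | ∃ x ∈ X, ∃ n, initSeg x n = t}

@[simp]
theorem length_initSeg (x : ℕ → Bool) (n : ℕ) : (initSeg x n).length = n :=
  List.length_ofFn

theorem initSeg_succ (x : ℕ → Bool) (n : ℕ) : initSeg x (n + 1) = initSeg x n ++ [x n] :=
  List.ofFn_succ_last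

theorem initSeg_eq_initSeg_iff {x y : ℕ → Bool} {n : ℕ} :
    initSeg x n = initSeg y n ↔ x ∈ cylinder y n := by
  simp [initSeg, mem_cylinder_iff, funext_iff, Fin.forall_iff]

theorem eq_initSeg_of_prefix {s : List Bool} {x : ℕ → Bool} {n : ℕ} (h : s <+: initSeg x n) :
    s = initSeg x s.length := by
  have hle : s.length ≤ n := by simpa using h.length_le
  refine List.ext_getElem (by simp) fun i hi _ => ?_
  rw [h.getElem hi]
  simp [initSeg]

theorem initSeg_prefix (x : ℕ → Bool) {m n : ℕ} (h : m ≤ n) : initSeg x m <+: initSeg x n := by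
  refine List.prefix_iff_eq_take.mpr (List.ext_getElem (by simp; omega) fun i hi _ => ?_)
  simp [initSeg]

variable {X : Set (ℕ → Bool)}

theorem mem_prefixTree_of_prefix {s t : List Bool} (ht : t ∈ prefixTree X) (hst : s <+: t) :
    s ∈ prefixTree X := by
  obtain ⟨x, hx, n, rfl⟩ := ht
  exact ⟨x, hx, s.length, (eq_initSeg_of_prefix hst).symm⟩

theorem exists_split_of_mem_prefixTree
    (hX : ∀ x ∈ X, ∀ n, ∃ x' ∈ X, x' ≠ x ∧ x' ∈ cylinder x n) {s : List Bool}
    (hs : s ∈ prefixTree X) :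
    ∃ t : List Bool, s <+: t ∧ t ++ [false] ∈ prefixTree X ∧ t ++ [true] ∈ prefixTree X := by
  obtain ⟨x, hx, n, rfl⟩ := hs
  obtain ⟨x', hx', hne, hcyl⟩ := hX x hx n
  set q := firstDiff x' x
  have hnq : n ≤ q := (mem_cylinder_iff_le_firstDiff hne n).mp hcyl
  have hsplit : initSeg x' (q + 1) = initSeg x q ++ [x' q] := by
    rw [initSeg_succ, initSeg_eq_initSeg_iff.mpr (mem_cylinder_firstDiff x' x)]
  have h_x : initSeg x q ++ [x q] ∈ prefixTree X := ⟨x, hx, q + 1, initSeg_succ x q⟩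
  have h_x' : initSeg x q ++ [x' q] ∈ prefixTree X := ⟨x', hx', q + 1, hsplit⟩
  have hbit : x' q ≠ x q := apply_firstDiff_ne hne
  refine ⟨initSeg x q, initSeg_prefix x hnq, ?_⟩
  cases hxq : x q <;> cases hx'q : x' q <;> simp_all

theorem branches_prefixTree_subset (hX : IsClosed X) : branches (prefixTree X) ⊆ X := by
  intro x hx
  by_contra hxX
  obtain ⟨n, hdisj⟩ := exists_disjoint_cylinder hX hxX
  obtain ⟨x', hx', m, hm⟩ := hx n
  have hmn : m = n := by simpa using congrArg List.length hm
  subst hmn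
  exact Set.disjoint_left.mp hdisj hx' (initSeg_eq_initSeg_iff.mp hm)

end PrefixTree

theorem exists_ne_mem_cylinder_of_mem_range {f : (ℕ → Bool) → ℕ → Bool} (hf : Continuous f)
    (hinj : Injective f) {x : ℕ → Bool} (hx : x ∈ Set.range f) (n : ℕ) :
    ∃ x' ∈ Set.range f, x' ≠ x ∧ x' ∈ cylinder x n := by
  obtain ⟨y, rfl⟩ := hx
  have hnhds : f ⁻¹' cylinder (f y) n ∈ nhds y :=
    hf.continuousAt.preimage_mem_nhds ((isOpen_cylinder _ _ n).mem_nhds (self_mem_cylinder _ n))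
  obtain ⟨_, ⟨z, K, rfl⟩, hyz, hsub⟩ := (isTopologicalBasis_cylinders _).mem_nhds_iff.mp hnhds
  rw [mem_cylinder_iff_eq] at hyz
  refine ⟨f (update y K (!y K)), ⟨_, rfl⟩, hinj.ne fun h => ?_,
    hsub (hyz ▸ update_mem_cylinder y K _)⟩
  simpa using congrFun h K

theorem exists_injective_restrict {ι : Type*} [Finite ι] {y : ι → ℕ → Bool}
    (hy : Injective y) : ∃ k, Injective fun j (i : Fin k) => y j i := by
  have : ∀ p : ι × ι, ∀ᶠ k in Filter.atTop,
      ((fun i : Fin k => y p.1 i) = fun i : Fin k => y p.2 i) → p.1 = p.2 := by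
    rintro ⟨a, b⟩
    by_cases hab : a = b
    · exact Filter.Eventually.of_forall fun _ _ => hab
    obtain ⟨m, hm⟩ := ne_iff.mp (hy.ne hab)
    exact Filter.eventually_atTop.mpr ⟨m + 1, fun k hk h => absurd (congrFun h ⟨m, hk⟩) hm⟩
  obtain ⟨k, hk⟩ := (Filter.eventually_all.mpr this).exists
  exact ⟨k, fun a b h => hk (a, b) h⟩

/-- A query `⟨k, f⟩` asks for the value of `f` on the restriction `y ↾ k` of a point `y`. -/
abbrev Query := Σ k : ℕ, (Fin k → Bool) → Bool

def Query.eval (q : Query) (y : ℕ → Bool) : Bool :=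
  q.2 fun i => y i

def answers (e : ℕ → Query) (y : ℕ → Bool) (m : ℕ) : Bool :=
  (e m).eval y

section Answers

variable {e : ℕ → Query}

theorem continuous_answers (e : ℕ → Query) : Continuous (answers e) :=
  continuous_pi fun m => (continuous_of_discreteTopology (f := (e m).2)).comp
    (continuous_pi fun _ => continuous_apply _)

theorem answers_injective (he : Surjective e) : Injective (answers e) := by
  intro y y' h
  funext k
  obtain ⟨m, hm⟩ := he ⟨k + 1, fun z => z (Fin.last k)⟩
  have := congrFun h m
  rwa [answers, answers, hm] at this

theorem exists_answers_eq (he : Surjective e) {ι : Type*} [Finite ι] {y : ι → ℕ → Bool}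
    (hy : Injective y) (g : ι → Bool) : ∃ m, ∀ j, answers e (y j) m = g j := by
  obtain ⟨k, hk⟩ := exists_injective_restrict hy
  obtain ⟨m, hm⟩ := he ⟨k, extend (fun j (i : Fin k) => y j i) g fun _ => false⟩
  exact ⟨m, fun j => by rw [answers, hm]; exact hk.extend_apply g (fun _ => false) j⟩

theorem exists_card_eq_shatters_of_two_pow_le (he : Surjective e) {n : ℕ}
    {A : Set (ℕ → Bool)} (hA : A ⊆ Set.range (answers e)) (hcard : (2 : Cardinal) ^ n ≤ #A) :
    ∃ S : Set ℕ, #S = n ∧ Shatters A S := by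
  obtain ⟨x⟩ : Nonempty ((Fin n → Bool) ↪ A) := (le_def _ _).mp (by simpa using hcard)
  choose y hy using fun v => hA (x v).2
  have hy_inj : Injective y := fun v w h => x.injective (Subtype.ext (by rw [← hy, ← hy, h]))
  choose p hp using fun i : Fin n => exists_answers_eq he hy_inj fun v => v i
  exact exists_card_eq_shatters (fun v => x v) (fun v => (x v).2) p fun v i => by
    rw [← hy, hp]

end Answers

/-- There is a perfect tree `T ⊆ 2^{<ω}` such that every `A ⊆ [T]` with `|A| ≥ 2^n`
shatters a set of size `n`; consequently every infinite subset of `[T]` has infinite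
string dimension. -/
theorem stmt12 :
    ∃ T : Set (List Bool),
      (∀ t ∈ T, ∀ s : List Bool, s <+: t → s ∈ T) ∧
      (∀ s ∈ T, ∃ t : List Bool, s <+: t ∧ t ++ [false] ∈ T ∧ t ++ [true] ∈ T) ∧
      (∀ (n : ℕ) (A : Set (ℕ → Bool)), A ⊆ branches T → (2 : Cardinal) ^ n ≤ #A →
        ∃ S : Set ℕ, #S = n ∧ Shatters A S) ∧
      (∀ A : Set (ℕ → Bool), A ⊆ branches T → A.Infinite → ℵ₀ ≤ sdim A) := by
  obtain ⟨e, he⟩ := exists_surjective_nat Query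
  have hbranches : branches (prefixTree (Set.range (answers e))) ⊆ Set.range (answers e) :=
    branches_prefixTree_subset (isCompact_range (continuous_answers e)).isClosed
  have hshat : ∀ (n : ℕ) (A : Set (ℕ → Bool)), A ⊆ branches (prefixTree (Set.range (answers e))) →
      (2 : Cardinal) ^ n ≤ #A → ∃ S : Set ℕ, #S = n ∧ Shatters A S := fun n A hA hcard =>
    exists_card_eq_shatters_of_two_pow_le he (hA.trans hbranches) hcard
  refine ⟨prefixTree (Set.range (answers e)), fun t ht s hst => mem_prefixTree_of_prefix ht hst,
    fun s => exists_split_of_mem_prefixTree fun x hx =>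
      exists_ne_mem_cylinder_of_mem_range (continuous_answers e) (answers_injective he) hx,
    hshat, fun A hAT hinf => aleph0_le_sdim fun n => hshat n A hAT ?_⟩
  have hA : ℵ₀ ≤ #A := by
    have := hinf.to_subtype
    exact aleph0_le_mk A
  exact_mod_cast (natCast_lt_aleph0 : ((2 ^ n : ℕ) : Cardinal) < ℵ₀).le.trans hA
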